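/- Let (p_j)_{j≥1} be a sequence of distinct points of E such that for every n the Gram matrix A_n of p_1, …, p_n is positive definite, and suppose (p_j) is a uniqueness set in the sense that every g ∈ H satisfying ⟨g, h(p_j)⟩ = 0 for all j ≥ 1 also satisfies ⟨g, h(p)⟩ = 0 for all p ∈ E. Then for every f ∈ H, the Aveiro approximations f*_{A_n} converge in H, as n → ∞, to the orthogonal projection f* of f onto the closed linear span of {h(p) : p ∈ E}. -/

import Mathlib

open scoped ComplexInnerProductSpace ComplexOrder

/-!
The Aveiro approximation built from `p 0, …, p (n-1)` is the orthogonal projection of `f` onto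
`V n = span {h (p i) | i < n}`: it lies in `V n`, and `f` minus it is orthogonal to every
`h (p i)` because the inverse Gram matrix undoes the Gram matrix. The `V n` increase, and the
uniqueness hypothesis says that `⋃ V n` and `{h q}` have the same orthogonal complement, so their
closed spans coincide. Projections onto an increasing family of subspaces converge to the
projection onto the closure of their union, which is `f*`.
-/

open Submodule Filter Matrix
open scoped InnerProductSpace ComplexConjugate

instance Submodule.finiteDimensional_span_range {K V ι : Type*} [DivisionRing K]
    [AddCommGroup V] [Module K V] [Finite ι] (v : ι → V) :
    FiniteDimensional K (span K (Set.range v)) :=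
  FiniteDimensional.span_of_finite K (Set.finite_range v)

section

variable {𝕜 E : Type*} [RCLike 𝕜] [NormedAddCommGroup E] [InnerProductSpace 𝕜 E]

theorem Submodule.mem_orthogonal_span_iff {s : Set E} {g : E} :
    g ∈ (span 𝕜 s)ᗮ ↔ ∀ x ∈ s, ⟪x, g⟫_𝕜 = 0 := by
  rw [← span_singleton_le_iff_mem, ← isOrtho_iff_le, isOrtho_span]
  simp only [Set.mem_singleton_iff, forall_eq]
  exact forall₂_congr fun _ _ => inner_eq_zero_symm

theorem Submodule.topologicalClosure_span_eq_of_forall_inner_eq_zero [CompleteSpace E]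
    {s t : Set E} (hst : s ⊆ t)
    (hts : ∀ g : E, (∀ x ∈ s, ⟪x, g⟫_𝕜 = 0) → ∀ y ∈ t, ⟪y, g⟫_𝕜 = 0) :
    (span 𝕜 s).topologicalClosure = (span 𝕜 t).topologicalClosure := by
  have horth : (span 𝕜 s)ᗮ = (span 𝕜 t)ᗮ :=
    le_antisymm (fun g hg => mem_orthogonal_span_iff.2 (hts g (mem_orthogonal_span_iff.1 hg)))
      (orthogonal_le (span_mono hst))
  rw [← orthogonal_orthogonal_eq_closure, horth, orthogonal_orthogonal_eq_closure]

theorem Submodule.iSup_span_range_fin (v : ℕ → E) :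
    ⨆ n, span 𝕜 (Set.range fun i : Fin n => v i) = span 𝕜 (Set.range v) := by
  rw [← span_iUnion]
  congr 1
  ext x
  simp only [Set.mem_iUnion, Set.mem_range]
  exact ⟨fun ⟨_, i, hi⟩ => ⟨i, hi⟩, fun ⟨j, hj⟩ => ⟨j + 1, ⟨j, j.lt_succ_self⟩, hj⟩⟩

theorem Submodule.monotone_span_range_fin (v : ℕ → E) :
    Monotone fun n => span 𝕜 (Set.range fun i : Fin n => v i) := by
  intro m n hmn
  refine span_mono ?_
  rintro _ ⟨i, rfl⟩
  exact ⟨Fin.castLE hmn i, rfl⟩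

variable {ι : Type*} [Fintype ι] [DecidableEq ι]

variable (𝕜) in
noncomputable def aveiroApprox (v : ι → E) (f : E) : E :=
  ∑ j, ∑ k, (⟪v j, f⟫_𝕜 * conj ((gram 𝕜 v)⁻¹ j k)) • v k

theorem aveiroApprox_mem_span (v : ι → E) (f : E) :
    aveiroApprox 𝕜 v f ∈ span 𝕜 (Set.range v) :=
  sum_mem fun _ _ => sum_mem fun k _ => smul_mem _ _ (subset_span ⟨k, rfl⟩)

theorem inner_aveiroApprox {v : ι → E} (hv : IsUnit (gram 𝕜 v)) (f : E) (i : ι) :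
    ⟪v i, aveiroApprox 𝕜 v f⟫_𝕜 = ⟪v i, f⟫_𝕜 := by
  have hinv : (gram 𝕜 v)⁻¹ * gram 𝕜 v = 1 := nonsing_inv_mul _ ((isUnit_iff_isUnit_det _).1 hv)
  calc ⟪v i, aveiroApprox 𝕜 v f⟫_𝕜
      = ∑ j, ⟪v j, f⟫_𝕜 * conj (((gram 𝕜 v)⁻¹ * gram 𝕜 v) j i) := by
        simp only [aveiroApprox, inner_sum, inner_smul_right, mul_apply, gram_apply, map_sum,
          map_mul, inner_conj_symm, Finset.mul_sum, mul_assoc]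
    _ = ⟪v i, f⟫_𝕜 := by simp [hinv, one_apply]

theorem starProjection_span_range_eq_aveiroApprox {v : ι → E} (hv : IsUnit (gram 𝕜 v)) (f : E) :
    (span 𝕜 (Set.range v)).starProjection f = aveiroApprox 𝕜 v f := by
  refine eq_starProjection_of_mem_orthogonal (aveiroApprox_mem_span v f) ?_
  rw [mem_orthogonal_span_iff]
  rintro _ ⟨i, rfl⟩
  rw [inner_sub_right, inner_aveiroApprox hv, sub_self]

end

theorem stmt3_general {H : Type*} [NormedAddCommGroup H] [InnerProductSpace ℂ H] [CompleteSpace H]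
    {E : Type*} (h : E → H) (p : ℕ → E) (f : H)
    (A : (n : ℕ) → Matrix (Fin n) (Fin n) ℂ)
    (hA : ∀ n (j k : Fin n), A n j k = ⟪h (p j), h (p k)⟫)
    (hpos : ∀ n, (A n).PosDef)
    (huniq : ∀ g : H, (∀ j : ℕ, ⟪h (p j), g⟫ = 0) → ∀ q : E, ⟪h q, g⟫ = 0)
    (fstar : H)
    (hmem : fstar ∈ (Submodule.span ℂ (Set.range h)).topologicalClosure)
    (horth : ∀ g ∈ (Submodule.span ℂ (Set.range h)).topologicalClosure, ⟪g, f - fstar⟫ = 0) :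
    Filter.Tendsto
      (fun n : ℕ => ∑ j : Fin n, ∑ k : Fin n,
        (⟪h (p j), f⟫ * (starRingEnd ℂ) ((A n)⁻¹ j k)) • h (p k))
      Filter.atTop (nhds fstar) := by
  have hgram : ∀ n, A n = gram ℂ fun i : Fin n => h (p i) := fun n => Matrix.ext (hA n)
  have happrox : ∀ n, (span ℂ (Set.range fun i : Fin n => h (p i))).starProjection f =
      ∑ j : Fin n, ∑ k : Fin n, (⟪h (p j), f⟫ * conj ((A n)⁻¹ j k)) • h (p k) := fun n => by
    have hunit := (hpos n).isUnit
    rw [hgram] at hunit ⊢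
    exact starProjection_span_range_eq_aveiroApprox hunit f
  have hclosure : (⨆ n, span ℂ (Set.range fun i : Fin n => h (p i))).topologicalClosure =
      (span ℂ (Set.range h)).topologicalClosure := by
    rw [iSup_span_range_fin (fun j => h (p j))]
    refine topologicalClosure_span_eq_of_forall_inner_eq_zero (Set.range_comp_subset_range p h) ?_
    rintro g hg _ ⟨q, rfl⟩
    exact huniq g (fun j => hg _ ⟨j, rfl⟩) q
  have hfstar : (span ℂ (Set.range h)).topologicalClosure.starProjection f = fstar :=
    eq_starProjection_of_mem_of_inner_eq_zero hmem fun w hw => inner_eq_zero_symm.1 (horth w hw)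
  have hlim := starProjection_tendsto_closure_iSup _
    (monotone_span_range_fin (𝕜 := ℂ) fun j => h (p j)) f
  simpa only [happrox, hclosure, hfstar] using hlim

/-- **Aveiro Method: convergence over a uniqueness set.**
Let `(p j)` be a sequence of distinct points of `E` whose Gram matrices `A n` (of the first
`n` points) are all positive definite, and assume `(p j)` is a uniqueness set: any `g ∈ H`
with `⟨g, h (p j)⟩ = 0` for all `j` satisfies `⟨g, h q⟩ = 0` for all `q ∈ E`. Then for every
`f ∈ H` the Aveiro approximations `f*_{A n}` converge to the orthogonal projection `f*` of `f`
onto the closed linear span of `{h q : q ∈ E}` (characterized by: `f*` lies in the closure of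
the span and `f − f*` is orthogonal to it). -/
theorem stmt3 {H : Type*} [NormedAddCommGroup H] [InnerProductSpace ℂ H] [CompleteSpace H]
    {E : Type*} (h : E → H) (p : ℕ → E) (hdist : Function.Injective p) (f : H)
    (A : (n : ℕ) → Matrix (Fin n) (Fin n) ℂ)
    (hA : ∀ n (j k : Fin n), A n j k = ⟪h (p j), h (p k)⟫)
    (hpos : ∀ n, (A n).PosDef)
    (huniq : ∀ g : H, (∀ j : ℕ, ⟪h (p j), g⟫ = 0) → ∀ q : E, ⟪h q, g⟫ = 0)
    (fstar : H)
    (hmem : fstar ∈ (Submodule.span ℂ (Set.range h)).topologicalClosure)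
    (horth : ∀ g ∈ (Submodule.span ℂ (Set.range h)).topologicalClosure, ⟪g, f - fstar⟫ = 0) :
    Filter.Tendsto
      (fun n : ℕ => ∑ j : Fin n, ∑ k : Fin n,
        (⟪h (p j), f⟫ * (starRingEnd ℂ) ((A n)⁻¹ j k)) • h (p k))
      Filter.atTop (nhds fstar) :=
  stmt3_general h p f A hA hpos huniq fstar hmem horth
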